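/- arXiv:0904.1351 — 8 statements merged into one kernel-verified Lean document; each statement's English description precedes it below -/
import Mathlib

section
/- More generally, the partial transpose of |x⟩⟨x| with x = Σₖ λₖ vₖ ⊗ zₖ (Schmidt decomposition with at least two nonzero coefficients λₖ, Σ|λₖ|² = 1) is not positive semidefinite: for indices k ≠ l with λₖλ̄ₗ ≠ 0, the vector Ψ₋ = vₖ⊗zₗ − vₗ⊗zₖ or Ψ₊ = vₖ⊗zₗ + vₗ⊗zₖ witnesses a negative expectation value ∓2Re(λₖλ̄ₗ). -/
open Matrix
open scoped ComplexOrder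

open ComplexConjugate

/-- Partial transposition `(t ⊗ id)`: transpose the first tensor factor in the
Schmidt basis `{vₖ}` (whose coordinates we use). -/
def partialTranspose {n : ℕ} (ρ : Matrix (Fin n × Fin n) (Fin n × Fin n) ℂ) :
    Matrix (Fin n × Fin n) (Fin n × Fin n) ℂ :=
  fun p q => ρ (q.1, p.2) (p.1, q.2)

/-! Partial transposition moves the coherence `λₖλ̄ₗ` between `vₖ⊗zₖ` and `vₗ⊗zₗ` onto the
pair `vₖ⊗zₗ`, `vₗ⊗zₖ`, which carries no weight in `|x⟩⟨x|`. On the span of that pair the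
partial transpose is therefore the traceless Hermitian matrix `[[0, λ̄ₖλₗ], [λₖλ̄ₗ, 0]]`,
whose quadratic form at `(a, b)` is `2 Re(b̄ a λₖλ̄ₗ)`; it has the eigenvalue `-|λₖλₗ| < 0`. -/

section TwoPointQuadraticForm

variable {ι R : Type*} [Fintype ι] [DecidableEq ι] [CommSemiring R] [StarRing R]

theorem star_dotProduct_mulVec_single_add_single (M : Matrix ι ι R) (i j : ι) (a b : R) :
    star (Pi.single i a + Pi.single j b) ⬝ᵥ M *ᵥ (Pi.single i a + Pi.single j b) =
      star a * M i i * a + star a * M i j * b + star b * M j i * a + star b * M j j * b := by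
  simp only [star_add, ← Pi.single_star, add_dotProduct, mulVec_add, dotProduct_add,
    single_dotProduct, mulVec_single, Pi.smul_apply, op_smul_eq_mul, col_apply]
  ring

end TwoPointQuadraticForm

/-- The coordinates of `∑ₖ λₖ vₖ ⊗ zₖ` in the product basis `{vᵢ ⊗ zⱼ}`. -/
def schmidtVector {n : ℕ} (lam : Fin n → ℂ) : Fin n × Fin n → ℂ :=
  fun p => if p.1 = p.2 then lam p.1 else 0

theorem partialTranspose_schmidt_quadraticForm {n : ℕ} (lam : Fin n → ℂ) {k l : Fin n}
    (hkl : k ≠ l) (a b : ℂ) :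
    star (Pi.single (k, l) a + Pi.single (l, k) b) ⬝ᵥ
        partialTranspose (vecMulVec (schmidtVector lam) (star (schmidtVector lam))) *ᵥ
          (Pi.single (k, l) a + Pi.single (l, k) b) =
      ((2 * (conj b * a * (lam k * conj (lam l))).re : ℝ) : ℂ) := by
  rw [star_dotProduct_mulVec_single_add_single]
  simp only [partialTranspose, vecMulVec_apply, Pi.star_apply, schmidtVector, if_true,
    if_neg hkl, if_neg hkl.symm, star_zero, mul_zero, zero_mul, add_zero, zero_add]
  rw [← Complex.add_conj]
  simp only [map_mul, Complex.conj_conj, Complex.star_def]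
  ring

theorem schmidt_rank_ge_two_partial_transpose_not_posSemidef_general
    {n : ℕ} (lam : Fin n → ℂ)
    (k l : Fin n) (hkl : k ≠ l) (hlam : lam k * conj (lam l) ≠ 0) :
    let x : Fin n × Fin n → ℂ := fun p => if p.1 = p.2 then lam p.1 else 0
    let ρ := partialTranspose (Matrix.vecMulVec x (star x))
    let Ψminus : Fin n × Fin n → ℂ :=
      fun p => (if p = (k, l) then 1 else 0) - (if p = (l, k) then 1 else 0)
    let Ψplus : Fin n × Fin n → ℂ :=
      fun p => (if p = (k, l) then 1 else 0) + (if p = (l, k) then 1 else 0)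
    star Ψminus ⬝ᵥ ρ.mulVec Ψminus = -(((2 * (lam k * conj (lam l)).re : ℝ)) : ℂ) ∧
    star Ψplus ⬝ᵥ ρ.mulVec Ψplus = (((2 * (lam k * conj (lam l)).re : ℝ)) : ℂ) ∧
    ¬ ρ.PosSemidef := by
  intro x ρ Ψminus Ψplus
  set μ := lam k * conj (lam l)
  have hform : ∀ a b : ℂ, star (Pi.single (k, l) a + Pi.single (l, k) b) ⬝ᵥ
      ρ *ᵥ (Pi.single (k, l) a + Pi.single (l, k) b) = ((2 * (conj b * a * μ).re : ℝ) : ℂ) :=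
    partialTranspose_schmidt_quadraticForm lam hkl
  have hΨminus : Ψminus = Pi.single (k, l) 1 + Pi.single (l, k) (-1) := by
    funext p; simp only [Ψminus, Pi.add_apply, Pi.single_apply]; split_ifs <;> ring
  have hΨplus : Ψplus = Pi.single (k, l) 1 + Pi.single (l, k) 1 := by
    funext p; simp [Ψplus, Pi.single_apply]
  refine ⟨?_, ?_, fun hρ => ?_⟩
  · rw [hΨminus, hform]; simp
  · rw [hΨplus, hform]; simp
  · -- `vₖ⊗zₗ - μ vₗ⊗zₖ` has expectation `-2|μ|²`; `Ψ∓` would not do when `Re μ = 0`.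
    have hneg := hρ.dotProduct_mulVec_nonneg (Pi.single (k, l) 1 + Pi.single (l, k) (-μ))
    rw [hform, map_neg, neg_mul, mul_one, neg_mul, Complex.conj_mul', Complex.neg_re,
      Complex.zero_le_real] at hneg
    norm_cast at hneg
    have hμ : 0 < ‖μ‖ ^ 2 := pow_pos (norm_pos_iff.mpr hlam) 2
    linarith

/-- For a pure state with Schmidt decomposition `x = ∑ₖ λₖ vₖ ⊗ zₖ` (in Schmidt
coordinates), if `k ≠ l` and `λₖ λ̄ₗ ≠ 0`, then the vectors
`Ψ∓ = vₖ⊗zₗ ∓ vₗ⊗zₖ` have expectation values `∓2 Re(λₖ λ̄ₗ)` in the partial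
transpose of `|x⟩⟨x|`, and the partial transpose is not positive semidefinite. -/
theorem schmidt_rank_ge_two_partial_transpose_not_posSemidef
    {n : ℕ} (lam : Fin n → ℂ) (hnorm : ∑ i, ‖lam i‖ ^ 2 = 1)
    (k l : Fin n) (hkl : k ≠ l) (hlam : lam k * conj (lam l) ≠ 0) :
    let x : Fin n × Fin n → ℂ := fun p => if p.1 = p.2 then lam p.1 else 0
    let ρ := partialTranspose (Matrix.vecMulVec x (star x))
    let Ψminus : Fin n × Fin n → ℂ :=
      fun p => (if p = (k, l) then 1 else 0) - (if p = (l, k) then 1 else 0)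
    let Ψplus : Fin n × Fin n → ℂ :=
      fun p => (if p = (k, l) then 1 else 0) + (if p = (l, k) then 1 else 0)
    star Ψminus ⬝ᵥ ρ.mulVec Ψminus = -(((2 * (lam k * conj (lam l)).re : ℝ)) : ℂ) ∧
    star Ψplus ⬝ᵥ ρ.mulVec Ψplus = (((2 * (lam k * conj (lam l)).re : ℝ)) : ℂ) ∧
    ¬ ρ.PosSemidef :=
  schmidt_rank_ge_two_partial_transpose_not_posSemidef_general lam k l hkl hlam
end

section
/- The map φ*(a) = Tr_H((a ⊗ 1) P_x), where P_x is the projection onto a unit vector x ∈ H⊗K, is co-completely positive: for all finite families aᵢ ∈ B(H), bᵢ ∈ B(K) and any vector w ∈ K, Σᵢⱼ (w, bᵢ* φ*(aⱼ* aᵢ) bⱼ w) ≥ 0. -/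
open Matrix
open scoped ComplexOrder

open Kronecker

/-!
Reshape `x ∈ H ⊗ K` into the `H × K` matrix `Y` with entries `conj x(i, j)`. Then
`φ*(c) = Yᴴ cᵀ Y`, and the transpose turns `aⱼᴴ aᵢ` into `aᵢᵀ conj(aⱼ)`, so that
`∑ᵢⱼ bᵢᴴ φ*(aⱼᴴ aᵢ) bⱼ = Cᴴ C` with `C = ∑ᵢ conj(aᵢ) Y bᵢ`,
which is positive semidefinite.
-/

/-- The partial trace over `H` of a matrix on `H ⊗ K`. -/
noncomputable def partialTraceH {m n : ℕ} (M : Matrix (Fin m × Fin n) (Fin m × Fin n) ℂ) :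
    Matrix (Fin n) (Fin n) ℂ :=
  fun j l => ∑ i, M (i, j) (i, l)

section CoCompletelyPositive

variable {m n R : Type*} [Fintype m] [Fintype n]
  [CommRing R] [StarRing R]

def IsCoCompletelyPositive [PartialOrder R] (φ : Matrix m m R → Matrix n n R) : Prop :=
  ∀ (N : ℕ) (a : Fin N → Matrix m m R) (b : Fin N → Matrix n n R),
    (∑ i, ∑ j, (b i)ᴴ * φ ((a j)ᴴ * a i) * b j).PosSemidef

theorem sum_conjTranspose_mul_transpose_mul_eq {N : ℕ} (Y : Matrix m n R)
    (a : Fin N → Matrix m m R) (b : Fin N → Matrix n n R) :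
    ∑ i, ∑ j, (b i)ᴴ * (Yᴴ * ((a j)ᴴ * a i)ᵀ * Y) * b j =
      (∑ i, (a i)ᵀᴴ * Y * b i)ᴴ * ∑ j, (a j)ᵀᴴ * Y * b j := by
  simp only [conjTranspose_sum, Matrix.sum_mul, Matrix.mul_sum, conjTranspose_mul,
    conjTranspose_conjTranspose, transpose_mul, conjTranspose_transpose_eq_transpose_conjTranspose,
    Matrix.mul_assoc]
  exact Finset.sum_comm

theorem isCoCompletelyPositive_conjTranspose_mul_transpose_mul [PartialOrder R]
    [StarOrderedRing R] (Y : Matrix m n R) :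
    IsCoCompletelyPositive fun c : Matrix m m R => Yᴴ * cᵀ * Y := fun _ a b => by
  simpa only [sum_conjTranspose_mul_transpose_mul_eq] using posSemidef_conjTranspose_mul_self _

end CoCompletelyPositive

theorem partialTraceH_kronecker_one_mul_vecMulVec {m n : ℕ} (x : Fin m × Fin n → ℂ)
    (c : Matrix (Fin m) (Fin m) ℂ) :
    partialTraceH ((c ⊗ₖ (1 : Matrix (Fin n) (Fin n) ℂ)) * vecMulVec x (star x)) =
      (of fun i j => star (x (i, j)))ᴴ * cᵀ * of fun i j => star (x (i, j)) := by
  ext j l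
  simp only [partialTraceH, mul_apply, vecMulVec_apply, kroneckerMap_apply, transpose_apply,
    conjTranspose_apply, of_apply, star_star, Fintype.sum_prod_type, one_apply, Pi.star_apply,
    mul_ite, mul_one, mul_zero, ite_mul, zero_mul, Finset.sum_ite_eq, Finset.mem_univ, if_true,
    Finset.sum_mul]
  exact Finset.sum_congr rfl fun _ _ => Finset.sum_congr rfl fun _ _ => by ring

theorem pure_state_entanglement_map_is_coCP_general {m n : ℕ}
    (x : Fin m × Fin n → ℂ)
    (φstar : Matrix (Fin m) (Fin m) ℂ → Matrix (Fin n) (Fin n) ℂ)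
    (hφ : ∀ a, φstar a =
      partialTraceH ((a ⊗ₖ (1 : Matrix (Fin n) (Fin n) ℂ)) * Matrix.vecMulVec x (star x)))
    (N : ℕ) (a : Fin N → Matrix (Fin m) (Fin m) ℂ) (b : Fin N → Matrix (Fin n) (Fin n) ℂ)
    (w : Fin n → ℂ) :
    0 ≤ star w ⬝ᵥ (∑ i, ∑ j, (b i)ᴴ * φstar ((a j)ᴴ * a i) * b j).mulVec w := by
  obtain rfl : φstar = fun c =>
      (of fun i j => star (x (i, j)))ᴴ * cᵀ * of fun i j => star (x (i, j)) :=
    funext fun c => (hφ c).trans (partialTraceH_kronecker_one_mul_vecMulVec x c)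
  exact (isCoCompletelyPositive_conjTranspose_mul_transpose_mul _ N a b).dotProduct_mulVec_nonneg w

/-- The entanglement map `φ*(a) = Tr_H((a ⊗ 1) P_x)` of a pure state `P_x = |x⟩⟨x|`
is co-completely positive: `(w, ∑ᵢⱼ bᵢ* φ*(aⱼ* aᵢ) bⱼ w) ≥ 0` for all finite families
`aᵢ ∈ B(H)`, `bᵢ ∈ B(K)` and every vector `w ∈ K`. -/
theorem pure_state_entanglement_map_is_coCP {m n : ℕ}
    (x : Fin m × Fin n → ℂ) (hx : ∑ p, ‖x p‖ ^ 2 = 1)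
    (φstar : Matrix (Fin m) (Fin m) ℂ → Matrix (Fin n) (Fin n) ℂ)
    (hφ : ∀ a, φstar a =
      partialTraceH ((a ⊗ₖ (1 : Matrix (Fin n) (Fin n) ℂ)) * Matrix.vecMulVec x (star x)))
    (N : ℕ) (a : Fin N → Matrix (Fin m) (Fin m) ℂ) (b : Fin N → Matrix (Fin n) (Fin n) ℂ)
    (w : Fin n → ℂ) :
    0 ≤ star w ⬝ᵥ (∑ i, ∑ j, (b i)ᴴ * φstar ((a j)ᴴ * a i) * b j).mulVec w :=
  pure_state_entanglement_map_is_coCP_general x φstar hφ N a b w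
end

section
/- A hyponormal compact operator on a complex Hilbert space is normal; in particular every hyponormal operator on a finite-dimensional Hilbert space is normal. -/
/-!
Hyponormality survives subtracting a scalar, so `T ξ = c • ξ` forces `T† ξ = conj c • ξ`: every
eigenspace of `T` is invariant under `T†`, and on it `T` and `T†` commute. Hence the closed span
`M` of all eigenvectors reduces `T`, and the compression of `T` to `Mᗮ` is again compact and
hyponormal. Hyponormal operators satisfy `‖Tⁿ‖ = ‖T‖ⁿ`, so their spectral radius is `‖T‖`, and by
the Fredholm alternative a nonzero compact hyponormal operator has a nonzero eigenvalue. As `T` has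
no eigenvector in `Mᗮ`, it vanishes there, and then so does `T†`. Thus `T†T - TT†` vanishes on `M`
and on `Mᗮ`.
-/

open ContinuousLinearMap Module Module.End
open scoped InnerProductSpace ComplexConjugate

lemma Module.End.iSup_mem_invtSubmodule {R M ι : Type*} [Semiring R] [AddCommMonoid M] [Module R M]
    {f : End R M} {p : ι → Submodule R M} (h : ∀ i, p i ∈ f.invtSubmodule) :
    ⨆ i, p i ∈ f.invtSubmodule :=
  iSup_le fun i => (h i).trans (Submodule.comap_mono (le_iSup p i))

lemma ContinuousLinearMap.eq_zero_of_le_ker_of_le_ker_orthogonal {𝕜 E F : Type*} [RCLike 𝕜]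
    [NormedAddCommGroup E] [InnerProductSpace 𝕜 E] [AddCommGroup F] [Module 𝕜 F]
    [TopologicalSpace F]
    {A : E →L[𝕜] F} {K : Submodule 𝕜 E} [K.HasOrthogonalProjection]
    (hK : K ≤ A.ker) (hK' : Kᗮ ≤ A.ker) : A = 0 := by
  ext ξ
  simpa using sup_le hK hK' (K.sup_orthogonal_of_hasOrthogonalProjection ▸ Submodule.mem_top)

section RCLike

variable {𝕜 H : Type*} [RCLike 𝕜] [NormedAddCommGroup H] [InnerProductSpace 𝕜 H]
  [CompleteSpace H]

def IsHyponormal (T : H →L[𝕜] H) : Prop := ∀ ξ, ‖adjoint T ξ‖ ≤ ‖T ξ‖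

namespace IsHyponormal

variable {T : H →L[𝕜] H}

lemma norm_adjoint_sub_smul_le (hT : IsHyponormal T) (c : 𝕜) (ξ : H) :
    ‖adjoint T ξ - conj c • ξ‖ ≤ ‖T ξ - c • ξ‖ := by
  have hre : RCLike.re ⟪adjoint T ξ, conj c • ξ⟫_𝕜 = RCLike.re ⟪T ξ, c • ξ⟫_𝕜 := by
    rw [inner_smul_right, inner_smul_right, adjoint_inner_left, ← inner_conj_symm, ← map_mul,
      RCLike.conj_re]
  have hsq : ‖adjoint T ξ - conj c • ξ‖ ^ 2 ≤ ‖T ξ - c • ξ‖ ^ 2 := by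
    rw [norm_sub_sq (𝕜 := 𝕜), norm_sub_sq (𝕜 := 𝕜), hre, norm_smul, norm_smul, RCLike.norm_conj]
    nlinarith [hT ξ, norm_nonneg (adjoint T ξ)]
  exact (pow_le_pow_iff_left₀ (norm_nonneg _) (norm_nonneg _) two_ne_zero).mp hsq

lemma adjoint_apply_eq_of_apply_eq (hT : IsHyponormal T) {c : 𝕜} {ξ : H} (h : T ξ = c • ξ) :
    adjoint T ξ = conj c • ξ := by
  simpa [h, sub_eq_zero] using hT.norm_adjoint_sub_smul_le c ξ

lemma eigenspace_mem_invtSubmodule_adjoint (hT : IsHyponormal T) (c : 𝕜) :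
    eigenspace (T : End 𝕜 H) c ∈ invtSubmodule (adjoint T : End 𝕜 H) := by
  intro ξ hξ
  rw [Submodule.mem_comap, coe_coe, hT.adjoint_apply_eq_of_apply_eq (mem_eigenspace_iff.mp hξ)]
  exact Submodule.smul_mem _ _ hξ

lemma adjoint_comp_self_apply_eq_of_apply_eq (hT : IsHyponormal T) {c : 𝕜} {ξ : H}
    (h : T ξ = c • ξ) : (adjoint T ∘L T) ξ = (T ∘L adjoint T) ξ := by
  rw [comp_apply, comp_apply, h, map_smul, hT.adjoint_apply_eq_of_apply_eq h, map_smul, h,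
    smul_smul, smul_smul, mul_comm]

lemma mul_of_commute (hT : IsHyponormal T) {P : H →L[𝕜] H} (hP : IsSelfAdjoint P)
    (h : Commute P T) : IsHyponormal (T * P) := by
  have h' : adjoint (T * P) = adjoint T * P := by
    simpa [← star_eq_adjoint, hP.star_eq] using congr(star $(h.eq)).symm
  exact fun ξ => h' ▸ hT (P ξ)

lemma norm_apply_sq_le (hT : IsHyponormal T) (ξ : H) : ‖T ξ‖ ^ 2 ≤ ‖T (T ξ)‖ * ‖ξ‖ :=
  calc ‖T ξ‖ ^ 2 = RCLike.re ⟪adjoint T (T ξ), ξ⟫_𝕜 := by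
        rw [adjoint_inner_left, inner_self_eq_norm_sq]
    _ ≤ ‖adjoint T (T ξ)‖ * ‖ξ‖ := (RCLike.re_le_norm _).trans (norm_inner_le_norm _ _)
    _ ≤ ‖T (T ξ)‖ * ‖ξ‖ := by gcongr; exact hT _

lemma norm_pow_succ_sq_le (hT : IsHyponormal T) (n : ℕ) :
    ‖T ^ (n + 1)‖ ^ 2 ≤ ‖T ^ (n + 2)‖ * ‖T ^ n‖ := by
  have hbound : ∀ x, ‖(T ^ (n + 1)) x‖ ≤ √(‖T ^ (n + 2)‖ * ‖T ^ n‖) * ‖x‖ := fun x => by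
    rw [← Real.sqrt_sq (norm_nonneg x), ← Real.sqrt_mul (by positivity),
      Real.le_sqrt (by positivity) (by positivity)]
    calc ‖(T ^ (n + 1)) x‖ ^ 2 ≤ ‖(T ^ (n + 2)) x‖ * ‖(T ^ n) x‖ := by
          simpa only [pow_succ', mul_apply_eq_comp, comp_apply] using
            hT.norm_apply_sq_le ((T ^ n) x)
      _ ≤ (‖T ^ (n + 2)‖ * ‖x‖) * (‖T ^ n‖ * ‖x‖) := by gcongr <;> exact le_opNorm _ _
      _ = ‖T ^ (n + 2)‖ * ‖T ^ n‖ * ‖x‖ ^ 2 := by ring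
  calc ‖T ^ (n + 1)‖ ^ 2 ≤ √(‖T ^ (n + 2)‖ * ‖T ^ n‖) ^ 2 := by
        gcongr; exact opNorm_le_bound _ (Real.sqrt_nonneg _) hbound
    _ = ‖T ^ (n + 2)‖ * ‖T ^ n‖ := Real.sq_sqrt (by positivity)

lemma norm_mul_norm_pow_le (hT : IsHyponormal T) : ∀ n : ℕ, ‖T‖ * ‖T ^ n‖ ≤ ‖T ^ (n + 1)‖
  | 0 => by
    rw [pow_zero, pow_one]
    exact mul_le_of_le_one_right (norm_nonneg T) norm_id_le
  | n + 1 => by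
    rcases (norm_nonneg (T ^ n)).eq_or_lt with h0 | hpos
    · have : ‖T ^ (n + 1)‖ = 0 := by
        refine le_antisymm ?_ (norm_nonneg _)
        simpa [pow_succ, ← h0] using norm_mul_le (T ^ n) T
      simp [this]
    · refine le_of_mul_le_mul_right ?_ hpos
      calc ‖T‖ * ‖T ^ (n + 1)‖ * ‖T ^ n‖ = ‖T ^ (n + 1)‖ * (‖T‖ * ‖T ^ n‖) := by ring
        _ ≤ ‖T ^ (n + 1)‖ ^ 2 := by
          rw [sq]; gcongr; exact norm_mul_norm_pow_le hT n
        _ ≤ ‖T ^ (n + 2)‖ * ‖T ^ n‖ := hT.norm_pow_succ_sq_le n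

lemma norm_pow [Nontrivial H] (hT : IsHyponormal T) : ∀ n : ℕ, ‖T ^ n‖ = ‖T‖ ^ n
  | 0 => by simp
  | n + 1 => le_antisymm (norm_pow_le' T n.succ_pos) <| by
      rw [pow_succ', ← norm_pow hT n]; exact hT.norm_mul_norm_pow_le n

end IsHyponormal

end RCLike

namespace IsHyponormal

variable {H : Type*} [NormedAddCommGroup H] [InnerProductSpace ℂ H] [CompleteSpace H]
  {T : H →L[ℂ] H}

lemma spectralRadius_eq_nnnorm [Nontrivial H] (hT : IsHyponormal T) :
    spectralRadius ℂ T = ‖T‖₊ := by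
  refine tendsto_nhds_unique (spectrum.pow_nnnorm_pow_one_div_tendsto_nhds_spectralRadius T) ?_
  refine tendsto_const_nhds.congr' ((Filter.eventually_ne_atTop 0).mono fun n hn => ?_)
  have : ‖T ^ n‖₊ = ‖T‖₊ ^ n := NNReal.eq (by simpa using hT.norm_pow n)
  dsimp only
  rw [this, ENNReal.coe_pow, one_div, ENNReal.pow_rpow_inv_natCast hn]

lemma exists_hasEigenvalue_ne_zero (hT : IsHyponormal T) (hc : IsCompactOperator T) (h0 : T ≠ 0) :
    ∃ c ≠ 0, HasEigenvalue (T : End ℂ H) c := by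
  have : Nontrivial H := by
    by_contra hH
    rw [not_nontrivial_iff_subsingleton] at hH
    exact h0 (Subsingleton.elim _ _)
  obtain ⟨c, hc_mem, hc_norm⟩ := spectrum.exists_nnnorm_eq_spectralRadius T
  have hc0 : c ≠ 0 := by
    rintro rfl
    rw [hT.spectralRadius_eq_nnnorm, nnnorm_zero, ENNReal.coe_zero, eq_comm, ENNReal.coe_eq_zero,
      nnnorm_eq_zero] at hc_norm
    exact h0 hc_norm
  exact ⟨c, hc0, (hc.hasEigenvalue_iff_mem_spectrum hc0).mpr hc_mem⟩

lemma apply_eq_zero_of_disjoint_eigenspace (hT : IsHyponormal T) (hc : IsCompactOperator T)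
    {K : Submodule ℂ H} [K.HasOrthogonalProjection] (hK : K ∈ invtSubmodule (T : End ℂ H))
    (hK' : Kᗮ ∈ invtSubmodule (T : End ℂ H))
    (hdisj : ∀ c, Disjoint (eigenspace (T : End ℂ H) c) K) {ξ : H} (hξ : ξ ∈ K) : T ξ = 0 := by
  set P := K.starProjection
  have hPT : Commute P T := K.isIdempotentElem_starProjection.commute_iff.mpr
    ⟨by simpa [P] using hK, by simpa [P] using hK'⟩
  have hTP : T * P = 0 := by
    by_contra hTP
    obtain ⟨c, hc0, hcTP⟩ := (hT.mul_of_commute (isSelfAdjoint_starProjection K) hPT)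
      |>.exists_hasEigenvalue_ne_zero (hc.comp_clm P) hTP
    obtain ⟨v, hv, hv0⟩ := hcTP.exists_hasEigenvector
    have hTPv : T (P v) = c • v := mem_eigenspace_iff.mp hv
    have hvK : v ∈ K := (K.smul_mem_iff hc0).mp (hTPv ▸ hK (K.starProjection_apply_mem v))
    rw [Submodule.starProjection_eq_self_iff.mpr hvK] at hTPv
    exact hv0 ((hdisj c).le_bot ⟨mem_eigenspace_iff.mpr hTPv, hvK⟩)
  simpa [P, Submodule.starProjection_eq_self_iff.mpr hξ] using congr($hTP ξ)

end IsHyponormal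

/-- A hyponormal compact operator on a complex Hilbert space is normal
(in particular every hyponormal operator on a finite-dimensional space is normal). -/
theorem hyponormal_compact_is_normal
    {H : Type*} [NormedAddCommGroup H] [InnerProductSpace ℂ H] [CompleteSpace H]
    (T : H →L[ℂ] H) (hcompact : IsCompactOperator T)
    (hhypo : ∀ ξ : H, ‖ContinuousLinearMap.adjoint T ξ‖ ≤ ‖T ξ‖) :
    (ContinuousLinearMap.adjoint T).comp T = T.comp (ContinuousLinearMap.adjoint T) := by
  have hT : IsHyponormal T := hhypo
  set M := (⨆ c, eigenspace (T : End ℂ H) c).topologicalClosure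
  have heM : ∀ c, eigenspace (T : End ℂ H) c ≤ M :=
    fun c => (le_iSup _ c).trans (Submodule.le_topologicalClosure _)
  have hTM : M ∈ invtSubmodule (T : End ℂ H) := Submodule.topologicalClosure_mem_invtSubmodule <|
    iSup_mem_invtSubmodule fun c => eigenspace_mem_invtSubmodule _ c
  have hT'M : M ∈ invtSubmodule (adjoint T : End ℂ H) :=
    Submodule.topologicalClosure_mem_invtSubmodule <|
      iSup_mem_invtSubmodule hT.eigenspace_mem_invtSubmodule_adjoint
  have hT_orth : ∀ ξ ∈ Mᗮ, T ξ = 0 := fun ξ =>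
    hT.apply_eq_zero_of_disjoint_eigenspace hcompact (orthogonal_mem_invtSubmodule hT'M)
      (by rwa [Submodule.orthogonal_orthogonal]) fun c => M.orthogonal_disjoint.mono_left (heM c)
  rw [← sub_eq_zero]
  refine eq_zero_of_le_ker_of_le_ker_orthogonal (K := M) ?_ fun ξ hξ => ?_
  · refine Submodule.topologicalClosure_minimal _ (iSup_le fun c ξ hξ => ?_) (isClosed_ker _)
    simpa [sub_eq_zero] using hT.adjoint_comp_self_apply_eq_of_apply_eq (mem_eigenspace_iff.mp hξ)
  · have hT'ξ : adjoint T ξ = 0 := by simpa [hT_orth ξ hξ] using hT ξ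
    simp [hT_orth ξ hξ, hT'ξ]
end

section
/- If a₁, a₂ are invertible d×d complex matrices such that both the block matrix [[a₁*a₁, a₁*a₂],[a₂*a₁, a₂*a₂]] and its block transpose [[a₁*a₁, a₂*a₁],[a₁*a₂, a₂*a₂]] are positive semidefinite, then a₂a₁⁻¹ is a normal matrix. -/
/-!
Put `b = a₂ a₁⁻¹`. The Schur complement of the positive definite corner `a₁ᴴ a₁` in the block
transpose is `a₁ᴴ (bᴴ b - b bᴴ) a₁`, so the commutator `bᴴ b - b bᴴ` is positive semidefinite. Like
every commutator it has trace zero, and a positive semidefinite matrix of trace zero vanishes.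
-/

open Matrix
open scoped ComplexOrder

namespace Matrix

variable {n 𝕜 : Type*} [Fintype n] [DecidableEq n] [RCLike 𝕜]

omit [DecidableEq n] in
theorem conjTranspose_mul_self_eq_of_posSemidef_sub {b : Matrix n n 𝕜}
    (h : (bᴴ * b - b * bᴴ).PosSemidef) : bᴴ * b = b * bᴴ :=
  sub_eq_zero.mp <| h.trace_eq_zero_iff.mp <| by rw [trace_sub, trace_mul_comm, sub_self]

theorem gram_schur_complement_eq {a c : Matrix n n 𝕜} (ha : IsUnit a) :
    cᴴ * c - aᴴ * c * (aᴴ * a)⁻¹ * (cᴴ * a) =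
      star a * ((c * a⁻¹)ᴴ * (c * a⁻¹) - (c * a⁻¹) * (c * a⁻¹)ᴴ) * a := by
  have hinv : a⁻¹ * a = 1 := nonsing_inv_mul a ((isUnit_iff_isUnit_det a).mp ha)
  have hinv' : aᴴ * a⁻¹ᴴ = 1 := by rw [← conjTranspose_mul, hinv, conjTranspose_one]
  rw [mul_inv_rev, ← conjTranspose_nonsing_inv, star_eq_conjTranspose]
  simp only [conjTranspose_mul, Matrix.mul_sub, Matrix.sub_mul, Matrix.mul_assoc, hinv,
    Matrix.mul_one]
  simp only [← Matrix.mul_assoc, hinv', Matrix.one_mul]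

theorem posSemidef_commutator_of_posSemidef_fromBlocks {a c : Matrix n n 𝕜} (ha : IsUnit a)
    (h : (fromBlocks (aᴴ * a) (cᴴ * a) (aᴴ * c) (cᴴ * c)).PosSemidef) :
    ((c * a⁻¹)ᴴ * (c * a⁻¹) - (c * a⁻¹) * (c * a⁻¹)ᴴ).PosSemidef := by
  have hpd : (aᴴ * a).PosDef := PosDef.conjTranspose_mul_self a (mulVec_injective_of_isUnit ha)
  let := hpd.isUnit.invertible
  have hschur := (hpd.fromBlocks₁₁ (cᴴ * a) (cᴴ * c)).mp <| by
    rwa [conjTranspose_mul, conjTranspose_conjTranspose]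
  rw [conjTranspose_mul, conjTranspose_conjTranspose, gram_schur_complement_eq ha] at hschur
  exact ha.posSemidef_star_left_conjugate_iff.mp hschur

end Matrix

theorem stormer_condition_implies_normal_general {d : ℕ}
    (a₁ a₂ : Matrix (Fin d) (Fin d) ℂ) (h₁ : IsUnit a₁)
    (hpos' : (Matrix.fromBlocks (a₁ᴴ * a₁) (a₂ᴴ * a₁) (a₁ᴴ * a₂) (a₂ᴴ * a₂)).PosSemidef) :
    (a₂ * a₁⁻¹)ᴴ * (a₂ * a₁⁻¹) = (a₂ * a₁⁻¹) * (a₂ * a₁⁻¹)ᴴ :=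
  conjTranspose_mul_self_eq_of_posSemidef_sub <|
    posSemidef_commutator_of_posSemidef_fromBlocks h₁ hpos'

/-- If `a₁, a₂` are invertible and both the block matrix
`[[a₁*a₁, a₁*a₂],[a₂*a₁, a₂*a₂]]` and its block transpose are positive semidefinite,
then `a₂ a₁⁻¹` is normal. -/
theorem stormer_condition_implies_normal {d : ℕ}
    (a₁ a₂ : Matrix (Fin d) (Fin d) ℂ) (h₁ : IsUnit a₁) (h₂ : IsUnit a₂)
    (hpos : (Matrix.fromBlocks (a₁ᴴ * a₁) (a₁ᴴ * a₂) (a₂ᴴ * a₁) (a₂ᴴ * a₂)).PosSemidef)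
    (hpos' : (Matrix.fromBlocks (a₁ᴴ * a₁) (a₂ᴴ * a₁) (a₁ᴴ * a₂) (a₂ᴴ * a₂)).PosSemidef) :
    (a₂ * a₁⁻¹)ᴴ * (a₂ * a₁⁻¹) = (a₂ * a₁⁻¹) * (a₂ * a₁⁻¹)ᴴ :=
  stormer_condition_implies_normal_general a₁ a₂ h₁ hpos'
end

section
/- Under the same hypotheses (both [[a₁*a₁, a₁*a₂],[a₂*a₁, a₂*a₂]] and its block transpose positive semidefinite, a₁ invertible), there exist complex numbers λᵢ and an orthonormal basis {eᵢ} such that a₂ = Σᵢ λᵢ |eᵢ⟩⟨a₁*eᵢ|. -/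
/-!
Put `b = a₂ a₁⁻¹`. The block-transposed Størmer matrix is the conjugate of
`[[1, bᴴ], [b, bᴴ b]]` by `diag(a₁, a₁)`, so its positivity makes the Schur complement
`bᴴ b - b bᴴ` positive semidefinite; this matrix has trace zero, hence vanishes, i.e. `b` is
normal. A normal matrix is unitarily diagonalisable, `b = ∑ λᵢ |eᵢ⟩⟨eᵢ|`, and then
`a₂ = b a₁ = ∑ λᵢ |eᵢ⟩⟨a₁ᴴ eᵢ|`.
-/

open Matrix Module End InnerProductSpace
open scoped ComplexConjugate ComplexOrder

namespace ContinuousLinearMap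

section RCLike

variable {𝕜 E : Type*} [RCLike 𝕜] [NormedAddCommGroup E] [InnerProductSpace 𝕜 E]
  [CompleteSpace E] {T : E →L[𝕜] E}

/-- `T - μ` is again normal, and a normal operator has the same kernel as its adjoint. -/
theorem IsStarNormal.adjoint_apply_eq_conj_smul (hT : IsStarNormal T) {μ : 𝕜} {v : E}
    (hv : T v = μ • v) : adjoint T v = conj μ • v := by
  have hS : IsStarNormal (T - μ • 1) :=
    Commute.isStarNormal_sub (by simpa using (Commute.one_right T).smul_right (conj μ))
  have := (IsStarNormal.adjoint_apply_eq_zero_iff hS v).mpr (by simp [hv])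
  simpa [← star_eq_adjoint, sub_eq_zero] using this

theorem IsStarNormal.orthogonalFamily_eigenspaces (hT : IsStarNormal T) :
    OrthogonalFamily 𝕜 (fun μ => eigenspace (T : E →ₗ[𝕜] E) μ)
      fun μ => (eigenspace (T : E →ₗ[𝕜] E) μ).subtypeₗᵢ := by
  rintro μ ν hμν ⟨v, hv⟩ ⟨w, hw⟩
  rw [mem_eigenspace_iff, coe_coe] at hv hw
  have h : conj μ * inner 𝕜 v w = conj ν * inner 𝕜 v w := by
    rw [← inner_smul_left, ← inner_smul_right, ← hv,
      ← IsStarNormal.adjoint_apply_eq_conj_smul hT hw, adjoint_inner_right]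
  exact (mul_eq_mul_right_iff.mp h).resolve_left fun h' => hμν ((starRingEnd 𝕜).injective h')

theorem IsStarNormal.orthogonalComplement_iSup_eigenspaces_invariant (hT : IsStarNormal T)
    ⦃v : E⦄ (hv : v ∈ (⨆ μ, eigenspace (T : E →ₗ[𝕜] E) μ)ᗮ) :
    T v ∈ (⨆ μ, eigenspace (T : E →ₗ[𝕜] E) μ)ᗮ := by
  rw [← Submodule.iInf_orthogonal] at hv ⊢
  refine (T : E →ₗ[𝕜] E).iInf_invariant (fun μ v hv w hw => ?_) v hv
  have hTw : T w = μ • w := by rwa [mem_eigenspace_iff, coe_coe] at hw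
  rw [coe_coe, ← adjoint_inner_left, IsStarNormal.adjoint_apply_eq_conj_smul hT hTw,
    inner_smul_left, hv w hw, mul_zero]

end RCLike

variable {E : Type*} [NormedAddCommGroup E] [InnerProductSpace ℂ E] [FiniteDimensional ℂ E]
  {S : E →L[ℂ] E}

theorem IsStarNormal.orthogonalComplement_iSup_eigenspaces_eq_bot (hS : IsStarNormal S) :
    (⨆ μ, eigenspace (S : E →ₗ[ℂ] E) μ)ᗮ = ⊥ := by
  by_contra hne
  have : Nontrivial (⨆ μ, eigenspace (S : E →ₗ[ℂ] E) μ)ᗮ := Submodule.nontrivial_iff_ne_bot.mpr hne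
  obtain ⟨μ, hμ⟩ := exists_eigenvalue
    ((S : E →ₗ[ℂ] E).restrict (IsStarNormal.orthogonalComplement_iSup_eigenspaces_invariant hS))
  exact hμ (eigenspace_restrict_eq_bot _
    ((Submodule.isOrtho_orthogonal_right _).mono_left (le_iSup _ μ)).disjoint)

theorem IsStarNormal.orthogonalFamily_eigenspaces' (hS : IsStarNormal S) :
    OrthogonalFamily ℂ (fun μ : Eigenvalues (S : E →ₗ[ℂ] E) => eigenspace (S : E →ₗ[ℂ] E) μ)
      fun μ => (eigenspace (S : E →ₗ[ℂ] E) μ).subtypeₗᵢ :=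
  (IsStarNormal.orthogonalFamily_eigenspaces hS).comp Subtype.coe_injective

theorem IsStarNormal.directSum_isInternal_eigenspaces (hS : IsStarNormal S) :
    DirectSum.IsInternal fun μ : Eigenvalues (S : E →ₗ[ℂ] E) => eigenspace (S : E →ₗ[ℂ] E) μ := by
  refine (IsStarNormal.orthogonalFamily_eigenspaces' hS).isInternal_iff.mpr ?_
  show (⨆ μ : { μ // eigenspace (S : E →ₗ[ℂ] E) μ ≠ ⊥ }, eigenspace (S : E →ₗ[ℂ] E) μ)ᗮ = ⊥
  rw [iSup_ne_bot_subtype, IsStarNormal.orthogonalComplement_iSup_eigenspaces_eq_bot hS]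

theorem IsStarNormal.exists_orthonormalBasis_apply_eq_smul {n : ℕ} (hn : finrank ℂ E = n)
    (hS : IsStarNormal S) :
    ∃ (e : OrthonormalBasis (Fin n) ℂ E) (lam : Fin n → ℂ), ∀ i, S (e i) = lam i • e i := by
  have hint := IsStarNormal.directSum_isInternal_eigenspaces hS
  have horth := IsStarNormal.orthogonalFamily_eigenspaces' hS
  exact ⟨hint.subordinateOrthonormalBasis hn horth,
    fun i => ↑(hint.subordinateOrthonormalBasisIndex hn i horth),
    fun i => mem_eigenspace_iff.mp (hint.subordinateOrthonormalBasis_subordinate hn i horth)⟩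

end ContinuousLinearMap

theorem OrthonormalBasis.eq_sum_smul_rankOne_of_apply_eq_smul {𝕜 E ι : Type*} [RCLike 𝕜]
    [NormedAddCommGroup E] [InnerProductSpace 𝕜 E] [Fintype ι] (e : OrthonormalBasis ι 𝕜 E)
    {T : E →L[𝕜] E} {lam : ι → 𝕜} (h : ∀ i, T (e i) = lam i • e i) :
    T = ∑ i, lam i • rankOne 𝕜 (e i) (e i) := by
  calc T = T ∘L ∑ i, rankOne 𝕜 (e i) (e i) := by
        rw [e.sum_rankOne_eq_id, ContinuousLinearMap.comp_id]
    _ = ∑ i, lam i • rankOne 𝕜 (e i) (e i) := by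
        simp [ContinuousLinearMap.comp_finsetSum, comp_rankOne, h]

namespace Matrix

variable {n 𝕜 : Type*} [Fintype n] [RCLike 𝕜]

theorem isStarNormal_of_posSemidef_conjTranspose_mul_self_sub {b : Matrix n n 𝕜}
    (h : (bᴴ * b - b * bᴴ).PosSemidef) : IsStarNormal b :=
  ⟨sub_eq_zero.mp <| h.trace_eq_zero_iff.mp <| by rw [trace_sub, trace_mul_comm, sub_self]⟩

variable [DecidableEq n]

theorem isStarNormal_of_fromBlocks_posSemidef {b : Matrix n n 𝕜}
    (h : (fromBlocks 1 bᴴ b (bᴴ * b)).PosSemidef) : IsStarNormal b := by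
  have : Invertible (1 : Matrix n n 𝕜) := invertibleOne
  have hschur := ((PosDef.one (n := n) (R := 𝕜)).fromBlocks₁₁ bᴴ (bᴴ * b)).mp
    (by rwa [conjTranspose_conjTranspose])
  rw [inv_one, Matrix.mul_one, conjTranspose_conjTranspose] at hschur
  exact isStarNormal_of_posSemidef_conjTranspose_mul_self_sub hschur

theorem isStarNormal_mul_inv_of_fromBlocks_posSemidef {a₁ a₂ : Matrix n n 𝕜} (h₁ : IsUnit a₁)
    (h : (fromBlocks (a₁ᴴ * a₁) (a₂ᴴ * a₁) (a₁ᴴ * a₂) (a₂ᴴ * a₂)).PosSemidef) :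
    IsStarNormal (a₂ * a₁⁻¹) := by
  set b := a₂ * a₁⁻¹
  have ha₂ : a₂ = b * a₁ :=
    (nonsing_inv_mul_cancel_right a₁ a₂ ((isUnit_iff_isUnit_det a₁).mp h₁)).symm
  have hdiag : IsUnit (fromBlocks a₁ 0 0 a₁) := by
    rw [isUnit_iff_isUnit_det, det_fromBlocks_zero₂₁]
    rw [isUnit_iff_isUnit_det] at h₁
    exact h₁.mul h₁
  apply isStarNormal_of_fromBlocks_posSemidef
  rw [← hdiag.posSemidef_star_left_conjugate_iff]
  convert h using 1
  rw [ha₂]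
  simp [fromBlocks_multiply, star_eq_conjTranspose, fromBlocks_conjTranspose, Matrix.mul_assoc,
    conjTranspose_mul]

theorem exists_eq_sum_smul_vecMulVec_of_isStarNormal {d : ℕ} {b : Matrix (Fin d) (Fin d) ℂ}
    (hb : IsStarNormal b) :
    ∃ (lam : Fin d → ℂ) (e : Fin d → Fin d → ℂ),
      (∀ i j, star (e i) ⬝ᵥ e j = if i = j then 1 else 0) ∧
      b = ∑ i, lam i • vecMulVec (e i) (star (e i)) := by
  obtain ⟨e, lam, he⟩ := ContinuousLinearMap.IsStarNormal.exists_orthonormalBasis_apply_eq_smul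
    finrank_euclideanSpace_fin (hb.map (toEuclideanCLM (𝕜 := ℂ) (n := Fin d)))
  refine ⟨lam, fun i => (e i).ofLp, fun i j => ?_, ?_⟩
  · rw [dotProduct_comm, ← EuclideanSpace.inner_eq_star_dotProduct,
      orthonormal_iff_ite.mp e.orthonormal]
  · calc b = toEuclideanLin.symm (toEuclideanCLM (𝕜 := ℂ) (n := Fin d) b : _ →ₗ[ℂ] _) := by
          rw [coe_toEuclideanCLM_eq_toEuclideanLin, LinearEquiv.symm_apply_apply]
      _ = ∑ i, lam i • vecMulVec (e i).ofLp (star (e i).ofLp) := by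
          rw [e.eq_sum_smul_rankOne_of_apply_eq_smul he]
          simp [symm_toEuclideanLin_rankOne]

end Matrix

theorem stormer_condition_gives_canonical_form_general {d : ℕ}
    (a₁ a₂ : Matrix (Fin d) (Fin d) ℂ) (h₁ : IsUnit a₁)
    (hpos' : (Matrix.fromBlocks (a₁ᴴ * a₁) (a₂ᴴ * a₁) (a₁ᴴ * a₂) (a₂ᴴ * a₂)).PosSemidef) :
    ∃ (lam : Fin d → ℂ) (e : Fin d → (Fin d → ℂ)),
      (∀ i j, star (e i) ⬝ᵥ e j = if i = j then 1 else 0) ∧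
      a₂ = ∑ i, lam i • Matrix.vecMulVec (e i) (star (a₁ᴴ.mulVec (e i))) := by
  obtain ⟨lam, e, he, hsum⟩ := exists_eq_sum_smul_vecMulVec_of_isStarNormal
    (isStarNormal_mul_inv_of_fromBlocks_posSemidef h₁ hpos')
  refine ⟨lam, e, he, ?_⟩
  calc a₂ = a₂ * a₁⁻¹ * a₁ :=
        (nonsing_inv_mul_cancel_right a₁ a₂ ((isUnit_iff_isUnit_det a₁).mp h₁)).symm
    _ = (∑ i, lam i • vecMulVec (e i) (star (e i))) * a₁ := by rw [hsum]
    _ = _ := by simp [Finset.sum_mul, vecMulVec_mul, star_mulVec]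

/-- Under the Størmer condition (both `[[a₁*a₁, a₁*a₂],[a₂*a₁, a₂*a₂]]` and its block
transpose positive semidefinite, `a₁, a₂` invertible), there are scalars `λᵢ` and an
orthonormal basis `{eᵢ}` with `a₂ = ∑ᵢ λᵢ |eᵢ⟩⟨a₁*eᵢ|`. -/
theorem stormer_condition_gives_canonical_form {d : ℕ}
    (a₁ a₂ : Matrix (Fin d) (Fin d) ℂ) (h₁ : IsUnit a₁) (h₂ : IsUnit a₂)
    (hpos : (Matrix.fromBlocks (a₁ᴴ * a₁) (a₁ᴴ * a₂) (a₂ᴴ * a₁) (a₂ᴴ * a₂)).PosSemidef)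
    (hpos' : (Matrix.fromBlocks (a₁ᴴ * a₁) (a₂ᴴ * a₁) (a₁ᴴ * a₂) (a₂ᴴ * a₂)).PosSemidef) :
    ∃ (lam : Fin d → ℂ) (e : Fin d → (Fin d → ℂ)),
      (∀ i j, star (e i) ⬝ᵥ e j = if i = j then 1 else 0) ∧
      a₂ = ∑ i, lam i • Matrix.vecMulVec (e i) (star (a₁ᴴ.mulVec (e i))) :=
  stormer_condition_gives_canonical_form_general a₁ a₂ h₁ hpos'
end

section
/- If a₁, a₂ are d×d matrices with a₁ invertible and a₂ = Σᵢ λᵢ |eᵢ⟩⟨a₁*eᵢ| for an orthonormal basis {eᵢ} and scalars λᵢ, then the block matrix decomposes as [[a₁*a₁, a₁*a₂],[a₂*a₁, a₂*a₂]] = Σᵢ αᵢ²(1+|λᵢ|²) (Pᵢ ⊗ 1)(1 ⊗ |φᵢ⟩⟨φᵢ|), where αᵢ = ‖a₁*eᵢ‖, φᵢ = a₁*eᵢ/αᵢ, and Pᵢ = (1+|λᵢ|²)^{-1} [[1, λᵢ],[λ̄ᵢ, |λᵢ|²]] is a rank-one projection in M₂(ℂ); in particular the block matrix lies in the cone generated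 by M₂(ℂ)⁺ ⊗ B(ℂᵈ)⁺. -/
/-!
Put `vᵢ = a₁ᴴ eᵢ` and `sᵢ = (1, λ̄ᵢ)`. Expanding `a₁` and `a₂` in the orthonormal basis gives
`a₁ = ∑ᵢ |eᵢ⟩⟨vᵢ|` and `a₂ = ∑ᵢ λᵢ |eᵢ⟩⟨vᵢ|`, so the row `B = [a₁ a₂]` equals `∑ᵢ |eᵢ⟩⟨sᵢ ⊗ vᵢ|`.
The block matrix is the Gram matrix `Bᴴ B`, which orthonormality of the `eᵢ` collapses to
`∑ᵢ |sᵢ ⊗ vᵢ⟩⟨sᵢ ⊗ vᵢ| = ∑ᵢ |sᵢ⟩⟨sᵢ| ⊗ |vᵢ⟩⟨vᵢ|`; finally `|sᵢ⟩⟨sᵢ| = (1 + |λᵢ|²) Pᵢ` and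
`|vᵢ⟩⟨vᵢ| = αᵢ² Qᵢ`.
-/

open scoped ComplexOrder
open Matrix Kronecker ComplexConjugate

namespace Matrix

variable {ι l m n 𝕜 : Type*}

section CommRing

variable [CommRing 𝕜] [StarRing 𝕜]

theorem kronecker_vecMulVec_self_star (u : m → 𝕜) (v : n → 𝕜) :
    vecMulVec u (star u) ⊗ₖ vecMulVec v (star v) =
      vecMulVec (fun p => u p.1 * v p.2) (star fun p => u p.1 * v p.2) := by
  ext ⟨a, b⟩ ⟨c, d⟩
  simp only [kroneckerMap_apply, vecMulVec_apply, Pi.star_apply, star_mul']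
  ring

variable [Fintype n]

theorem conjTranspose_mul_self_of_orthonormal [Fintype ι] [DecidableEq ι] {e : ι → n → 𝕜}
    (he : ∀ i j, star (e i) ⬝ᵥ e j = if i = j then 1 else 0) (f : ι → l → 𝕜) :
    (∑ i, vecMulVec (e i) (star (f i)))ᴴ * ∑ i, vecMulVec (e i) (star (f i)) =
      ∑ i, vecMulVec (f i) (star (f i)) := by
  simp [conjTranspose_sum, Matrix.sum_mul, Matrix.mul_sum, vecMulVec_mul_vecMulVec, he, apply_ite]

theorem sum_vecMulVec_star_of_orthonormal [DecidableEq n] {e : n → n → 𝕜}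
    (he : ∀ i j, star (e i) ⬝ᵥ e j = if i = j then 1 else 0) :
    ∑ i, vecMulVec (e i) (star (e i)) = 1 := by
  have hU : (of e)ᵀᴴ * (of e)ᵀ = 1 := by
    ext i j
    simpa [mul_apply, dotProduct, one_apply] using he i j
  rw [← mul_eq_one_comm.mp hU]
  ext x y
  simp [mul_apply, sum_apply, vecMulVec_apply]

theorem eq_sum_vecMulVec_of_orthonormal [DecidableEq n] {e : n → n → 𝕜}
    (he : ∀ i j, star (e i) ⬝ᵥ e j = if i = j then 1 else 0) (A : Matrix n l 𝕜) :
    A = ∑ i, vecMulVec (e i) (star (Aᴴ *ᵥ e i)) := by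
  conv_lhs => rw [← Matrix.one_mul A, ← sum_vecMulVec_star_of_orthonormal he]
  simp [Matrix.sum_mul, vecMulVec_mul, star_mulVec]

end CommRing

theorem gram_blocks_eq_conjTranspose_mul_self [Fintype n] [NonUnitalSemiring 𝕜] [StarRing 𝕜]
    (A : m → Matrix n l 𝕜) :
    (fun p q => ((A p.1)ᴴ * A q.1) p.2 q.2 : Matrix (m × l) (m × l) 𝕜) =
      (of fun x (p : m × l) => A p.1 x p.2)ᴴ * of fun x (p : m × l) => A p.1 x p.2 := by
  ext p q
  simp [mul_apply]

theorem smul_vecMulVec_inv_smul_star [Fintype n] {v : n → ℂ} {α : ℝ}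
    (hα : ((α ^ 2 : ℝ) : ℂ) = star v ⬝ᵥ v) :
    ((α ^ 2 : ℝ) : ℂ) • vecMulVec ((α : ℂ)⁻¹ • v) (star ((α : ℂ)⁻¹ • v)) = vecMulVec v (star v) := by
  rcases eq_or_ne α 0 with rfl | hα0
  -- the junk value `(0 : ℂ)⁻¹ = 0` is harmless here, since then `v = 0`
  · have hv : v = 0 := dotProduct_star_self_eq_zero.mp (by simpa using hα.symm)
    simp [hv]
  · rw [star_smul, smul_vecMulVec, vecMulVec_smul, smul_smul, smul_smul, RCLike.star_def,
      map_inv₀, Complex.conj_ofReal]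
    convert one_smul ℂ (vecMulVec v (star v))
    push_cast
    field_simp

theorem ofReal_sqrt_re_dotProduct_star_self_sq [Fintype n] (v : n → ℂ) :
    ((√(star v ⬝ᵥ v).re ^ 2 : ℝ) : ℂ) = star v ⬝ᵥ v := by
  obtain ⟨hre, him⟩ := Complex.le_def.mp (dotProduct_star_self_nonneg v)
  rw [Real.sq_sqrt (by simpa using hre)]
  exact Complex.ext rfl (by simpa using him)

theorem vecMulVec_one_conj_self_star (z : ℂ) :
    vecMulVec ![1, conj z] (star ![1, conj z]) = !![1, z; conj z, ((‖z‖ ^ 2 : ℝ) : ℂ)] := by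
  ext p q
  fin_cases p <;> fin_cases q <;> simp [vecMulVec_apply, mul_comm, Complex.mul_conj']

end Matrix

theorem stormer_block_matrix_separable_general {d : ℕ}
    (a₁ a₂ : Matrix (Fin d) (Fin d) ℂ)
    (lam : Fin d → ℂ) (e : Fin d → (Fin d → ℂ))
    (he : ∀ i j, star (e i) ⬝ᵥ e j = if i = j then 1 else 0)
    (ha₂ : a₂ = ∑ i, lam i • Matrix.vecMulVec (e i) (star (a₁ᴴ.mulVec (e i)))) :
    let α : Fin d → ℝ := fun i => Real.sqrt ((star (a₁ᴴ.mulVec (e i)) ⬝ᵥ a₁ᴴ.mulVec (e i)).re)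
    let φ : Fin d → (Fin d → ℂ) := fun i => ((α i : ℝ) : ℂ)⁻¹ • a₁ᴴ.mulVec (e i)
    let P : Fin d → Matrix (Fin 2) (Fin 2) ℂ := fun i =>
      (((1 + ‖lam i‖ ^ 2 : ℝ)) : ℂ)⁻¹ • !![1, lam i; conj (lam i), ((‖lam i‖ ^ 2 : ℝ) : ℂ)]
    let Q : Fin d → Matrix (Fin d) (Fin d) ℂ := fun i => Matrix.vecMulVec (φ i) (star (φ i))
    (fun p q => ((![a₁, a₂] p.1)ᴴ * (![a₁, a₂] q.1)) p.2 q.2 :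
        Matrix (Fin 2 × Fin d) (Fin 2 × Fin d) ℂ)
      = ∑ i, (((α i ^ 2 * (1 + ‖lam i‖ ^ 2) : ℝ)) : ℂ) • (P i ⊗ₖ Q i) ∧
    ∀ i, (P i).PosSemidef ∧ (Q i).PosSemidef := by
  intro α φ P Q
  set v := fun i => a₁ᴴ *ᵥ e i
  set s : Fin d → Fin 2 → ℂ := fun i => ![1, conj (lam i)]
  have hP : ∀ i, ((1 + ‖lam i‖ ^ 2 : ℝ) : ℂ) • P i = vecMulVec (s i) (star (s i)) := fun i => by
    rw [vecMulVec_one_conj_self_star, smul_inv_smul₀ (by positivity)]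
  have hQ : ∀ i, ((α i ^ 2 : ℝ) : ℂ) • Q i = vecMulVec (v i) (star (v i)) := fun i =>
    smul_vecMulVec_inv_smul_star (ofReal_sqrt_re_dotProduct_star_self_sq _)
  have hrow : (of fun x (p : Fin 2 × Fin d) => ![a₁, a₂] p.1 x p.2) =
      ∑ i, vecMulVec (e i) (star fun p => s i p.1 * v i p.2) := by
    ext x ⟨p, y⟩
    fin_cases p
    · conv_lhs => rw [eq_sum_vecMulVec_of_orthonormal he a₁]
      simp [Matrix.sum_apply, vecMulVec_apply, s, v]
    · simp [ha₂, Matrix.sum_apply, vecMulVec_apply, s, v, mul_left_comm]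
  refine ⟨?_, fun i => ⟨?_, posSemidef_vecMulVec_self_star _⟩⟩
  · rw [gram_blocks_eq_conjTranspose_mul_self, hrow, conjTranspose_mul_self_of_orthonormal he]
    refine Finset.sum_congr rfl fun i _ => ?_
    rw [← kronecker_vecMulVec_self_star, ← hP, ← hQ, smul_kronecker, kronecker_smul, smul_smul]
    congr 1
    push_cast
    ring
  · rw [← inv_smul_smul₀ (by positivity : ((1 + ‖lam i‖ ^ 2 : ℝ) : ℂ) ≠ 0) (P i), hP,
      ← Complex.ofReal_inv]
    exact (posSemidef_vecMulVec_self_star _).smul (by positivity)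

/-- If `a₁` is invertible and `a₂ = ∑ᵢ λᵢ |eᵢ⟩⟨a₁*eᵢ|` for an orthonormal basis `{eᵢ}`,
then the block matrix `[[a₁*a₁, a₁*a₂],[a₂*a₁, a₂*a₂]]` (viewed in `M₂(ℂ) ⊗ B(ℂᵈ)`)
equals `∑ᵢ αᵢ²(1+|λᵢ|²) Pᵢ ⊗ |φᵢ⟩⟨φᵢ|`, a sum of tensor products of positive elements. -/
theorem stormer_block_matrix_separable {d : ℕ}
    (a₁ a₂ : Matrix (Fin d) (Fin d) ℂ) (h₁ : IsUnit a₁)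
    (lam : Fin d → ℂ) (e : Fin d → (Fin d → ℂ))
    (he : ∀ i j, star (e i) ⬝ᵥ e j = if i = j then 1 else 0)
    (ha₂ : a₂ = ∑ i, lam i • Matrix.vecMulVec (e i) (star (a₁ᴴ.mulVec (e i)))) :
    let α : Fin d → ℝ := fun i => Real.sqrt ((star (a₁ᴴ.mulVec (e i)) ⬝ᵥ a₁ᴴ.mulVec (e i)).re)
    let φ : Fin d → (Fin d → ℂ) := fun i => ((α i : ℝ) : ℂ)⁻¹ • a₁ᴴ.mulVec (e i)
    let P : Fin d → Matrix (Fin 2) (Fin 2) ℂ := fun i =>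
      (((1 + ‖lam i‖ ^ 2 : ℝ)) : ℂ)⁻¹ • !![1, lam i; conj (lam i), ((‖lam i‖ ^ 2 : ℝ) : ℂ)]
    let Q : Fin d → Matrix (Fin d) (Fin d) ℂ := fun i => Matrix.vecMulVec (φ i) (star (φ i))
    (fun p q => ((![a₁, a₂] p.1)ᴴ * (![a₁, a₂] q.1)) p.2 q.2 :
        Matrix (Fin 2 × Fin d) (Fin 2 × Fin d) ℂ)
      = ∑ i, (((α i ^ 2 * (1 + ‖lam i‖ ^ 2) : ℝ)) : ℂ) • (P i ⊗ₖ Q i) ∧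
    ∀ i, (P i).PosSemidef ∧ (Q i).PosSemidef :=
  stormer_block_matrix_separable_general a₁ a₂ lam e he ha₂
end

section
/- Let P = |x₂⟩⟨x₂| be the projection onto the maximally entangled vector x₂ = (1/√3)(e₁⊗f₁ + e₂⊗f₂ + e₃⊗f₃) in ℂ³⊗ℂ³. For every operator S = Σᵢ aᵢ ⊗ bᵢ (finite sum) with all aᵢ, bᵢ positive semidefinite 3×3 matrices, ‖P − S‖ ≥ 1/6 in operator norm. -/
/-!
The partial transpose `Sᵀᵖ` of a separable positive operator `S` is positive (Peres–Horodecki),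
while `Pᵀᵖ` is one third of the flip operator, whose quadratic form at the antisymmetric vector
`w = e₁⊗f₂ − e₂⊗f₁` is `−2/3`. Hence `⟪w, (P − S)ᵀᵖ w⟫` has real part at most `−2/3`.
The partial transpose is not contractive for the operator norm, but its quadratic form at `w` is a
combination of quadratic forms of `P − S` at four vectors of norm at most `√2`, hence bounded
by `4 ‖P − S‖`.
-/

open Matrix
open scoped ComplexOrder
open Kronecker
open scoped Matrix.Norms.L2Operator

namespace Matrix

section PartialTranspose

variable {m n α : Type*}

def partialTranspose (M : Matrix (m × n) (m × n) α) : Matrix (m × n) (m × n) α :=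
  of fun p q => M (p.1, q.2) (q.1, p.2)

@[simp]
lemma partialTranspose_apply (M : Matrix (m × n) (m × n) α) (p q : m × n) :
    M.partialTranspose p q = M (p.1, q.2) (q.1, p.2) :=
  rfl

lemma partialTranspose_sub [Sub α] (M N : Matrix (m × n) (m × n) α) :
    (M - N).partialTranspose = M.partialTranspose - N.partialTranspose :=
  rfl

lemma partialTranspose_sum [AddCommMonoid α] {ι : Type*} (s : Finset ι)
    (M : ι → Matrix (m × n) (m × n) α) :
    (∑ i ∈ s, M i).partialTranspose = ∑ i ∈ s, (M i).partialTranspose := by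
  ext p q
  simp only [partialTranspose_apply, sum_apply]

lemma partialTranspose_kronecker [Mul α] (A : Matrix m m α) (B : Matrix n n α) :
    (A ⊗ₖ B).partialTranspose = A ⊗ₖ Bᵀ :=
  rfl

/-- Peres–Horodecki: a separable positive operator has a positive partial transpose. -/
theorem PosSemidef.partialTranspose_sum_kronecker {𝕜 ι : Type*} [RCLike 𝕜] [Finite m] [Finite n]
    (s : Finset ι) {a : ι → Matrix m m 𝕜} {b : ι → Matrix n n 𝕜}
    (ha : ∀ i ∈ s, (a i).PosSemidef) (hb : ∀ i ∈ s, (b i).PosSemidef) :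
    (∑ i ∈ s, a i ⊗ₖ b i).partialTranspose.PosSemidef := by
  rw [partialTranspose_sum]
  exact posSemidef_sum s fun i hi => by
    rw [partialTranspose_kronecker]
    exact (ha i hi).kronecker (hb i hi).transpose

end PartialTranspose

section QuadraticForm

variable {ι α : Type*} [Fintype ι] [DecidableEq ι]

lemma star_single_dotProduct_mulVec_single [CommSemiring α] [StarRing α] (A : Matrix ι ι α)
    (s : ι) (c : α) :
    star (Pi.single s c) ⬝ᵥ A *ᵥ Pi.single s c = star c * A s s * c := by
  simp [Pi.star_single, mulVec_single, mul_comm]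

lemma star_single_add_single_dotProduct_mulVec [CommSemiring α] [StarRing α] (A : Matrix ι ι α)
    (s t : ι) (c d : α) :
    star (Pi.single s c + Pi.single t d) ⬝ᵥ A *ᵥ (Pi.single s c + Pi.single t d) =
      star c * A s s * c + star c * A s t * d + star d * A t s * c + star d * A t t * d := by
  simp only [star_add, Pi.star_single, mulVec_add, mulVec_single, op_smul_eq_smul, dotProduct_add,
    dotProduct_smul, add_dotProduct, single_dotProduct, col_apply, smul_eq_mul]
  ring

end QuadraticForm

section Norm

variable {𝕜 ι : Type*} [RCLike 𝕜] [Fintype ι] [DecidableEq ι]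

lemma norm_star_dotProduct_mulVec_le (A : Matrix ι ι 𝕜) (x : ι → 𝕜) :
    ‖star x ⬝ᵥ A *ᵥ x‖ ≤ ‖A‖ * ‖WithLp.toLp 2 x‖ ^ 2 := by
  set y : EuclideanSpace 𝕜 ι := WithLp.toLp 2 x
  calc ‖star x ⬝ᵥ A *ᵥ x‖ = ‖inner 𝕜 y ((EuclideanSpace.equiv ι 𝕜).symm (A *ᵥ x))‖ := by
        rw [EuclideanSpace.inner_eq_star_dotProduct, dotProduct_comm]; rfl
    _ ≤ ‖y‖ * (‖A‖ * ‖y‖) := (norm_inner_le_norm _ _).trans (by grw [A.l2_opNorm_mulVec y])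
    _ = ‖A‖ * ‖y‖ ^ 2 := by ring

lemma norm_toLp_single_add_single_sq {s t : ι} (hst : s ≠ t) (c d : 𝕜) :
    ‖WithLp.toLp 2 (Pi.single s c + Pi.single t d : ι → 𝕜)‖ ^ 2 = ‖c‖ ^ 2 + ‖d‖ ^ 2 := by
  rw [EuclideanSpace.norm_sq_eq, Fintype.sum_eq_add s t hst fun p hp => by simp [hp.1, hp.2]]
  simp [hst, hst.symm]

end Norm

section PartialTransposeNorm

variable {𝕜 m n : Type*} [RCLike 𝕜] [Fintype m] [DecidableEq m] [Fintype n] [DecidableEq n]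

lemma norm_star_dotProduct_partialTranspose_mulVec_le (X : Matrix (m × n) (m × n) 𝕜)
    {i j : m} {k l : n} (hij : i ≠ j) :
    ‖star (Pi.single (i, l) 1 - Pi.single (j, k) 1) ⬝ᵥ
        X.partialTranspose *ᵥ (Pi.single (i, l) 1 - Pi.single (j, k) 1)‖ ≤ 4 * ‖X‖ := by
  set Q : (m × n → 𝕜) → 𝕜 := fun x => star x ⬝ᵥ X *ᵥ x
  have hQ_single (s : m × n) : ‖Q (Pi.single s 1)‖ ≤ ‖X‖ := by
    simpa [Q] using norm_star_dotProduct_mulVec_le X (Pi.single s 1)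
  have hQ_pair {s t : m × n} (hst : s ≠ t) (d : 𝕜) (hd : ‖d‖ = 1) :
      ‖Q (Pi.single s 1 + Pi.single t d)‖ ≤ 2 * ‖X‖ := by
    have := norm_star_dotProduct_mulVec_le X (Pi.single s 1 + Pi.single t d)
    rw [norm_toLp_single_add_single_sq hst, norm_one, hd] at this
    linarith
  have hne : (i, k) ≠ (j, l) := fun h => hij (Prod.ext_iff.mp h).1
  rw [sub_eq_add_neg, ← Pi.single_neg]
  have key : 2 * (star (Pi.single (i, l) 1 + Pi.single (j, k) (-1)) ⬝ᵥ
        X.partialTranspose *ᵥ (Pi.single (i, l) 1 + Pi.single (j, k) (-1))) =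
      2 * Q (Pi.single (i, l) 1) + 2 * Q (Pi.single (j, k) 1) +
        (Q (Pi.single (i, k) 1 + Pi.single (j, l) (-1)) -
          Q (Pi.single (i, k) 1 + Pi.single (j, l) 1)) := by
    simp only [Q, star_single_dotProduct_mulVec_single, star_single_add_single_dotProduct_mulVec,
      partialTranspose_apply, star_one, star_neg]
    ring
  refine le_of_mul_le_mul_left ?_ (two_pos : (0 : ℝ) < 2)
  calc 2 * ‖_‖ = ‖(2 : 𝕜) * _‖ := by rw [norm_mul, RCLike.norm_two]
    _ = _ := congrArg norm key
    _ ≤ 2 * (4 * ‖X‖) := by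
      grw [norm_add₃_le, norm_sub_le]
      simp only [norm_mul, RCLike.norm_two]
      linarith [hQ_single (i, l), hQ_single (j, k), hQ_pair hne (-1) (by simp),
        hQ_pair hne 1 norm_one]

end PartialTransposeNorm

end Matrix

/-- The projection `P = |x₂⟩⟨x₂|` onto the maximally entangled vector
`x₂ = (1/√3)(e₁⊗f₁ + e₂⊗f₂ + e₃⊗f₃)` in `ℂ³ ⊗ ℂ³` satisfies `‖P − S‖ ≥ 1/6` in
operator norm for every finite sum `S = ∑ᵢ aᵢ ⊗ bᵢ` of tensor products of positive
semidefinite operators. -/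
theorem kadison_ringrose_estimate (k : ℕ)
    (a : Fin k → Matrix (Fin 3) (Fin 3) ℂ) (b : Fin k → Matrix (Fin 3) (Fin 3) ℂ)
    (ha : ∀ i, (a i).PosSemidef) (hb : ∀ i, (b i).PosSemidef) :
    let x₂ : Fin 3 × Fin 3 → ℂ := fun p => if p.1 = p.2 then (1 / Real.sqrt 3 : ℝ) else 0
    (1 / 6 : ℝ) ≤ ‖Matrix.vecMulVec x₂ (star x₂) - ∑ i, a i ⊗ₖ b i‖ := by
  intro x₂
  have hM := norm_star_dotProduct_partialTranspose_mulVec_le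
    (vecMulVec x₂ (star x₂) - ∑ i, a i ⊗ₖ b i) (i := 0) (j := 1) (k := 0) (l := 1) (by decide)
  set w : Fin 3 × Fin 3 → ℂ := Pi.single (0, 1) 1 - Pi.single (1, 0) 1 with hw
  have hP : star w ⬝ᵥ (vecMulVec x₂ (star x₂)).partialTranspose *ᵥ w = -(2 / 3) := by
    rw [hw, sub_eq_add_neg, ← Pi.single_neg, star_single_add_single_dotProduct_mulVec]
    have h3 : ((√3 : ℝ) : ℂ)⁻¹ * ((√3 : ℝ) : ℂ)⁻¹ = 1 / 3 := by
      rw [← mul_inv, ← Complex.ofReal_mul, Real.mul_self_sqrt (by norm_num)]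
      norm_num
    norm_num [x₂, vecMulVec_apply, h3]
  have hS : 0 ≤ star w ⬝ᵥ (∑ i, a i ⊗ₖ b i).partialTranspose *ᵥ w :=
    (PosSemidef.partialTranspose_sum_kronecker _ (fun i _ => ha i) fun i _ => hb i)
      |>.dotProduct_mulVec_nonneg w
  rw [partialTranspose_sub, sub_mulVec, dotProduct_sub, hP, ← norm_neg, neg_sub,
    sub_neg_eq_add] at hM
  calc (1 / 6 : ℝ) = ‖(2 / 3 : ℂ)‖ / 4 := by norm_num
    _ ≤ ‖star w ⬝ᵥ (∑ i, a i ⊗ₖ b i).partialTranspose *ᵥ w + 2 / 3‖ / 4 := by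
      gcongr
      exact CStarAlgebra.norm_le_norm_of_nonneg_of_le (by norm_num [Complex.nonneg_iff])
        (le_add_of_nonneg_left hS)
    _ ≤ _ := by linarith
end

section
/- The Cho–Kye–Lee map φ[a,b,c] on M₃(ℂ) defined by φ[a,b,c](x) = ψ[a,b,c](x) − x, where ψ[a,b,c](x) is the diagonal matrix with entries (a x₁₁ + b x₂₂ + c x₃₃, a x₂₂ + b x₃₃ + c x₁₁, a x₃₃ + b x₁₁ + c x₂₂), is completely positive whenever a ≥ 3, b ≥ 0, c ≥ 0. -/
open Matrix
open scoped ComplexOrder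

/-- The diagonal part of the Cho–Kye–Lee maps on `M₃(ℂ)`. -/
noncomputable def psiCKL (a b c : ℝ) (x : Matrix (Fin 3) (Fin 3) ℂ) :
    Matrix (Fin 3) (Fin 3) ℂ :=
  Matrix.diagonal
    ![(a : ℂ) * x 0 0 + (b : ℂ) * x 1 1 + (c : ℂ) * x 2 2,
      (a : ℂ) * x 1 1 + (b : ℂ) * x 2 2 + (c : ℂ) * x 0 0,
      (a : ℂ) * x 2 2 + (b : ℂ) * x 0 0 + (c : ℂ) * x 1 1]

/-- The Cho–Kye–Lee map `φ[a,b,c](x) = ψ[a,b,c](x) − x`. -/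
noncomputable def phiCKL (a b c : ℝ) (x : Matrix (Fin 3) (Fin 3) ℂ) :
    Matrix (Fin 3) (Fin 3) ℂ :=
  psiCKL a b c x - x

/-!
Maps `x ↦ Kᴴ * x * K` are completely positive, since
`∑ᵢⱼ yᵢᴴ Kᴴ xᵢᴴ xⱼ K yⱼ = (∑ᵢ xᵢ K yᵢ)ᴴ (∑ⱼ xⱼ K yⱼ)`, and completely positive maps form a convex
cone. For the clock matrix `U = diag(1, ω, ω²)`, averaging `(Uᵏ)ᴴ x Uᵏ` over `k < 3` multiplies the
`(i, j)` entry by `∑ₖ ω^(k (j - i))`, which vanishes off the diagonal; hence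
`3 diag(x) - x = Uᴴ x U + (U²)ᴴ x U²`. This exhibits `φ[a,b,c]` as `(a - 3) diag(x)`, plus `b` and
`c` times cyclically shifted diagonals (sums of congruences by matrix units), plus two congruences.
-/

section CompletelyPositive

variable {n p R : Type*} [Fintype n] [Fintype p]

def IsCompletelyPositive [Ring R] [PartialOrder R] [StarRing R]
    (φ : Matrix n n R → Matrix p p R) : Prop :=
  ∀ (k : ℕ) (x : Fin k → Matrix n n R) (y : Fin k → Matrix p p R),
    (∑ i, ∑ j, (y i)ᴴ * φ ((x i)ᴴ * x j) * y j).PosSemidef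

section Ring

variable [Ring R] [PartialOrder R] [StarRing R] [StarOrderedRing R]

theorem isCompletelyPositive_conjTranspose_mul_mul (K : Matrix n p R) :
    IsCompletelyPositive fun x : Matrix n n R => Kᴴ * x * K := by
  intro k x y
  have : ∑ i, ∑ j, (y i)ᴴ * (Kᴴ * ((x i)ᴴ * x j) * K) * y j
      = (∑ i, x i * K * y i)ᴴ * ∑ j, x j * K * y j := by
    simp only [conjTranspose_sum, Matrix.sum_mul, Matrix.mul_sum, conjTranspose_mul,
      Matrix.mul_assoc]
    exact Finset.sum_comm
  rw [this]
  exact posSemidef_conjTranspose_mul_self _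

theorem IsCompletelyPositive.add {φ ψ : Matrix n n R → Matrix p p R}
    (hφ : IsCompletelyPositive φ) (hψ : IsCompletelyPositive ψ) :
    IsCompletelyPositive fun x => φ x + ψ x := by
  intro k x y
  simpa only [Matrix.mul_add, Matrix.add_mul, Finset.sum_add_distrib] using
    (hφ k x y).add (hψ k x y)

theorem IsCompletelyPositive.sum {ι : Type*} (s : Finset ι)
    {φ : ι → Matrix n n R → Matrix p p R} (hφ : ∀ m ∈ s, IsCompletelyPositive (φ m)) :
    IsCompletelyPositive fun x => ∑ m ∈ s, φ m x := by
  intro k x y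
  have : ∑ i, ∑ j, (y i)ᴴ * (∑ m ∈ s, φ m ((x i)ᴴ * x j)) * y j
      = ∑ m ∈ s, ∑ i, ∑ j, (y i)ᴴ * φ m ((x i)ᴴ * x j) * y j := by
    simp only [Finset.mul_sum, Finset.sum_mul]
    exact (Finset.sum_congr rfl fun _ _ => Finset.sum_comm).trans Finset.sum_comm
  rw [this]
  exact posSemidef_sum s fun m hm => hφ m hm k x y

theorem isCompletelyPositive_diagonal_comp [DecidableEq n] [DecidableEq p] (σ : p → n) :
    IsCompletelyPositive fun x : Matrix n n R => diagonal fun i => x (σ i) (σ i) := by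
  have : (fun x : Matrix n n R => diagonal fun i => x (σ i) (σ i))
      = fun x => ∑ i, (single (σ i) i (1 : R))ᴴ * x * single (σ i) i (1 : R) := by
    ext1 x
    simp [← sum_single_eq_diagonal]
  rw [this]
  exact IsCompletelyPositive.sum _ fun i _ => isCompletelyPositive_conjTranspose_mul_mul _

end Ring

theorem IsCompletelyPositive.smul [CommRing R] [PartialOrder R] [StarRing R]
    [StarOrderedRing R] {φ : Matrix n n R → Matrix p p R} (hφ : IsCompletelyPositive φ)
    {r : R} (hr : 0 ≤ r) : IsCompletelyPositive fun x => r • φ x := by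
  intro k x y
  simpa only [Matrix.mul_smul, Matrix.smul_mul, ← Finset.smul_sum] using (hφ k x y).smul hr

end CompletelyPositive

theorem IsPrimitiveRoot.geom_sum_star_pow_mul_pow {n : ℕ} {ζ : ℂ}
    (hζ : IsPrimitiveRoot ζ n) (i j : Fin n) :
    ∑ k ∈ Finset.range n, (star (ζ ^ (i : ℕ)) * ζ ^ (j : ℕ)) ^ k
      = if i = j then (n : ℂ) else 0 := by
  have hζ_unit : star ζ * ζ = 1 := by
    rw [Complex.star_def, Complex.conj_mul', hζ.norm'_eq_one (Fin.pos i).ne', Complex.ofReal_one,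
      one_pow]
  split_ifs with hij
  · subst hij
    rw [star_pow, ← mul_pow, hζ_unit]
    simp
  · set w := star (ζ ^ (i : ℕ)) * ζ ^ (j : ℕ)
    have hw_pow : w ^ n = 1 := by
      simp only [w, mul_pow, ← star_pow, ← pow_mul, pow_mul', hζ.pow_eq_one, one_pow, star_one,
        one_mul]
    have hw_ne : w ≠ 1 := by
      intro hw
      refine hij (Fin.ext (hζ.pow_inj i.isLt j.isLt ?_))
      calc ζ ^ (i : ℕ) = ζ ^ (i : ℕ) * w := by rw [hw, mul_one]
        _ = (star ζ * ζ) ^ (i : ℕ) * ζ ^ (j : ℕ) := by simp only [w, star_pow]; ring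
        _ = ζ ^ (j : ℕ) := by rw [hζ_unit, one_pow, one_mul]
    have := geom_sum_mul w n
    rw [hw_pow, sub_self] at this
    exact (mul_eq_zero.1 this).resolve_right (sub_ne_zero.2 hw_ne)

noncomputable def clockMatrix (n : ℕ) (ζ : ℂ) : Matrix (Fin n) (Fin n) ℂ :=
  diagonal fun i => ζ ^ (i : ℕ)

theorem sum_clockMatrix_pow_conjTranspose_mul_mul_pow {n : ℕ} {ζ : ℂ}
    (hζ : IsPrimitiveRoot ζ n) (x : Matrix (Fin n) (Fin n) ℂ) :
    ∑ k ∈ Finset.range n, (clockMatrix n ζ ^ k)ᴴ * x * clockMatrix n ζ ^ k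
      = (n : ℂ) • diagonal fun i => x i i := by
  ext i j
  have hterm : ∀ k, ((clockMatrix n ζ ^ k)ᴴ * x * clockMatrix n ζ ^ k) i j
      = x i j * (star (ζ ^ (i : ℕ)) * ζ ^ (j : ℕ)) ^ k := by
    intro k
    simp only [clockMatrix, diagonal_pow, diagonal_conjTranspose, diagonal_mul, mul_diagonal,
      Pi.star_apply, Pi.pow_apply, star_pow]
    ring
  rw [Matrix.sum_apply, Finset.sum_congr rfl fun k _ => hterm k, ← Finset.mul_sum,
    hζ.geom_sum_star_pow_mul_pow]
  split_ifs with hij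
  · subst hij; simp [mul_comm]
  · simp [hij]

theorem psiCKL_eq (a b c : ℝ) (x : Matrix (Fin 3) (Fin 3) ℂ) :
    psiCKL a b c x = (a : ℂ) • diagonal (fun i => x i i)
      + (b : ℂ) • diagonal (fun i => x (i + 1) (i + 1))
      + (c : ℂ) • diagonal (fun i => x (i + 2) (i + 2)) := by
  ext i j
  fin_cases i <;> fin_cases j <;> simp [psiCKL]

theorem phiCKL_eq {ζ : ℂ} (hζ : IsPrimitiveRoot ζ 3) (a b c : ℝ)
    (x : Matrix (Fin 3) (Fin 3) ℂ) :
    phiCKL a b c x = ((a - 3 : ℝ) : ℂ) • diagonal (fun i => x i i)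
      + (b : ℂ) • diagonal (fun i => x (i + 1) (i + 1))
      + (c : ℂ) • diagonal (fun i => x (i + 2) (i + 2))
      + ∑ k ∈ Finset.range 2, (clockMatrix 3 ζ ^ (k + 1))ᴴ * x * clockMatrix 3 ζ ^ (k + 1) := by
  have hpinch := sum_clockMatrix_pow_conjTranspose_mul_mul_pow hζ x
  rw [Finset.sum_range_succ', pow_zero, conjTranspose_one, Matrix.one_mul, Matrix.mul_one,
    ← eq_sub_iff_add_eq] at hpinch
  rw [phiCKL, psiCKL_eq, hpinch]
  push_cast
  module

/-- The map `φ[a,b,c]` is completely positive whenever `a ≥ 3`, `b ≥ 0`, `c ≥ 0`: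
all matrices `∑ᵢⱼ yᵢ* φ(xᵢ* xⱼ) yⱼ` are positive semidefinite. -/
theorem phiCKL_completely_positive (a b c : ℝ) (ha : 3 ≤ a) (hb : 0 ≤ b) (hc : 0 ≤ c)
    (k : ℕ) (x y : Fin k → Matrix (Fin 3) (Fin 3) ℂ) :
    (∑ i, ∑ j, (y i)ᴴ * phiCKL a b c ((x i)ᴴ * x j) * y j).PosSemidef := by
  have hζ := Complex.isPrimitiveRoot_exp 3 (by norm_num)
  have hφ : IsCompletelyPositive (phiCKL a b c) := by
    rw [funext (phiCKL_eq hζ a b c)]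
    refine ((((isCompletelyPositive_diagonal_comp id).smul ?_).add
      ((isCompletelyPositive_diagonal_comp (· + 1)).smul ?_)).add
      ((isCompletelyPositive_diagonal_comp (· + 2)).smul ?_)).add
      (IsCompletelyPositive.sum _ fun m _ => isCompletelyPositive_conjTranspose_mul_mul _)
    all_goals rw [Complex.zero_le_real]; linarith
  exact hφ k x y
end
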